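/- arXiv:1711.02444 — 3 statements merged into one kernel-verified Lean document; each statement's English description precedes it below -/
import Mathlib

section
/- Let A be an integral domain that is a finitely generated ℝ-algebra of Krull dimension 1 whose local rings are regular, and suppose Spec A has at least one rational point and the set of rational points is infinite. Then any f ∈ A vanishing at every rational point (i.e., killed by every ℝ-algebra homomorphism A → ℝ) is zero. -/
/-- A Noetherian local ring is *regular* if its maximal ideal can be generated by
`dim A` elements. -/
def IsRegularLocal (R : Type*) [CommRing R] [IsLocalRing R] : Prop :=
  IsNoetherianRing R ∧ ∃ s : Finset R, Ideal.span (s : Set R) = IsLocalRing.maximalIdeal R ∧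
    (s.card : WithBot (WithTop ℕ)) = ringKrullDim R

/-- Over a one-dimensional integral finitely generated `ℝ`-algebra with
regular local rings and infinitely many rational points, any element vanishing at all
rational points is zero. -/
theorem eq_zero_of_vanishes_on_rational_points_dim_one
    (A : Type*) [CommRing A] [IsDomain A] [Algebra ℝ A]
    (hft : Algebra.FiniteType ℝ A)
    (hdim : ringKrullDim A = 1)
    (hsmooth : ∀ p : PrimeSpectrum A, IsRegularLocal (Localization.AtPrime p.asIdeal))
    (hnonempty : Nonempty (A →ₐ[ℝ] ℝ))
    (hinf : Infinite (A →ₐ[ℝ] ℝ))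
    (f : A) (hf : ∀ φ : A →ₐ[ℝ] ℝ, φ f = 0) :
    f = 0 := by
  by_contra hne
  have hNoeth : IsNoetherianRing A := Algebra.FiniteType.isNoetherianRing ℝ A
  -- the kernel map is injective
  have hker : Function.Injective (fun φ : A →ₐ[ℝ] ℝ => RingHom.ker φ) := by
    intro φ ψ h
    replace h : RingHom.ker φ = RingHom.ker ψ := h
    ext a
    have h1 : a - algebraMap ℝ A (φ a) ∈ RingHom.ker φ := by
      simp [RingHom.mem_ker, map_sub, AlgHom.commutes]
    rw [h] at h1
    have h2 := RingHom.mem_ker.mp h1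
    simp only [map_sub, AlgHom.commutes, Algebra.algebraMap_self, RingHom.id_apply,
      sub_eq_zero] at h2
    exact h2.symm
  have hchain : ∀ (q p : Ideal A), q.IsPrime → p.IsPrime → ⊥ < q → q < p → False := by
    intro q p hq hp h1 h2
    let c : LTSeries (PrimeSpectrum A) :=
      ⟨2, ![⟨⊥, Ideal.bot_prime⟩, ⟨q, hq⟩, ⟨p, hp⟩], by
        intro i
        fin_cases i
        · exact h1
        · exact h2⟩
    have hle := Order.LTSeries.length_le_krullDim c
    rw [show Order.krullDim (PrimeSpectrum A) = ringKrullDim A from rfl, hdim] at hle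
    norm_num [c] at hle
  -- kernels are minimal primes over (f)
  have hmem : ∀ φ : A →ₐ[ℝ] ℝ, RingHom.ker φ ∈ (Ideal.span {f}).minimalPrimes := by
    intro φ
    have hprime : (RingHom.ker φ).IsPrime := RingHom.ker_isPrime φ
    refine ⟨⟨hprime, ?_⟩, ?_⟩
    · rw [Ideal.span_singleton_le_iff_mem, RingHom.mem_ker]; exact hf φ
    · rintro q ⟨hqprime, hqle⟩ hle
      by_contra hnle
      have hlt : q < RingHom.ker φ := lt_of_le_of_ne hle (fun h => hnle h.ge)
      have hqbot : ⊥ < q := by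
        refine bot_lt_iff_ne_bot.mpr (fun h => hne ?_)
        have : f ∈ q := hqle (Ideal.mem_span_singleton_self f)
        rwa [h, Ideal.mem_bot] at this
      exact hchain q (RingHom.ker φ) hqprime hprime hqbot hlt
  -- minimal primes over (f) are finite
  have hfin : (Ideal.span {f} : Ideal A).minimalPrimes.Finite := by
    rw [Ideal.minimalPrimes_eq_comap]
    exact Set.Finite.image _ (minimalPrimes.finite_of_isNoetherianRing _)
  -- contradiction with infinitude
  have : Set.Finite (Set.range (fun φ : A →ₐ[ℝ] ℝ => RingHom.ker φ)) :=
    hfin.subset (by rintro _ ⟨φ, rfl⟩; exact hmem φ)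
  have := Set.finite_coe_iff.mpr this
  exact Set.infinite_range_of_injective hker (Set.finite_coe_iff.mp this)
end

section
/- Let A be a regular local ring with maximal ideal m, and let f ∈ A. If there exist infinitely many elements h_i ∈ m with pairwise non-proportional images in m/m² such that f ∈ (h_i) for each i, and each (h_i) is a prime ideal, then f ∈ m^k for every k ≥ 1; consequently, by Krull's intersection theorem, f = 0. -/
open IsLocalRing

/-- In a regular local ring, if `f` lies in infinitely many principal prime
ideals `(h)` with `h ∈ m` having pairwise non-proportional images in `m/m²`, then
`f ∈ m^k` for all `k ≥ 1`, and consequently `f = 0` by Krull's intersection theorem. -/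
theorem eq_zero_of_mem_infinitely_many_principal_primes
    (A : Type*) [CommRing A] [IsLocalRing A] (hreg : IsRegularLocal A)
    (f : A) (S : Set A) (hSinf : S.Infinite)
    (hSm : S ⊆ (maximalIdeal A : Set A))
    (hnonprop : S.Pairwise fun h₁ h₂ => ∀ c : A,
      Ideal.Quotient.mk ((maximalIdeal A) ^ 2) (c * h₁) ≠
        Ideal.Quotient.mk ((maximalIdeal A) ^ 2) h₂)
    (hprime : ∀ h ∈ S, (Ideal.span {h}).IsPrime)
    (hf : ∀ h ∈ S, f ∈ Ideal.span {h}) :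
    (∀ k : ℕ, 1 ≤ k → f ∈ (maximalIdeal A) ^ k) ∧ f = 0 := by
  haveI : IsNoetherianRing A := hreg.1
  classical
  -- no element of S divides another element of S
  have hnd : ∀ a ∈ S, ∀ b ∈ S, a ≠ b → a ∉ Ideal.span {b} := by
    intro a ha b hb hab hmem
    rw [Ideal.mem_span_singleton] at hmem
    obtain ⟨c, hc⟩ := hmem
    exact hnonprop hb ha (Ne.symm hab) c (by rw [mul_comm, ← hc])
  -- key claim: f lies in span of product of any finite subset of S
  have key : ∀ t : Finset A, (↑t : Set A) ⊆ S → f ∈ Ideal.span {∏ h ∈ t, h} := by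
    intro t
    induction t using Finset.induction_on with
    | empty => intro _; simp [Ideal.span_singleton_one]
    | @insert a t ha ih =>
      intro hts
      have haS : a ∈ S := hts (by simp)
      have htS : (↑t : Set A) ⊆ S := fun x hx => hts (by simp [hx])
      obtain ⟨g, hg⟩ := Ideal.mem_span_singleton.mp (ih htS)
      haveI hp := hprime a haS
      have hPa : (∏ h ∈ t, h) ∉ Ideal.span {a} := by
        intro hmem
        obtain ⟨x, hx, hdvd⟩ := (Ideal.IsPrime.prod_mem_iff_exists_mem hp _).mp hmem
        exact hnd x (htS hx) a haS (fun e => ha (e ▸ hx)) hdvd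
      have hfa := hf a haS
      rw [hg] at hfa
      have hga : g ∈ Ideal.span {a} := by
        rcases hp.mem_or_mem hfa with h | h
        · exact absurd h hPa
        · exact h
      obtain ⟨d, hd⟩ := Ideal.mem_span_singleton.mp hga
      rw [Finset.prod_insert ha, Ideal.mem_span_singleton]
      exact ⟨d, by rw [hg, hd]; ring⟩
  constructor
  · intro k _
    obtain ⟨t, hts, htcard⟩ := hSinf.exists_subset_card_eq k
    have hprodmem : (∏ h ∈ t, h) ∈ (maximalIdeal A) ^ k := by
      rw [← htcard]
      clear htcard key
      induction t using Finset.induction_on with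
      | empty => simp
      | @insert a t ha ih =>
        rw [Finset.prod_insert ha, Finset.card_insert_of_notMem ha, pow_succ']
        exact Ideal.mul_mem_mul (hSm (hts (by simp)))
          (ih (fun x hx => hts (by simp [hx])))
    obtain ⟨g, hg⟩ := Ideal.mem_span_singleton.mp (key t hts)
    rw [hg]
    exact Ideal.mul_mem_right g _ hprodmem
  · have hbot : (⨅ i : ℕ, (maximalIdeal A) ^ i) = ⊥ :=
      Ideal.iInf_pow_eq_bot_of_isLocalRing _ (Ideal.IsPrime.ne_top ((IsLocalRing.maximalIdeal.isMaximal A).isPrime))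
    have hfmem : f ∈ ⨅ i : ℕ, (maximalIdeal A) ^ i := by
      rw [Ideal.mem_iInf]
      intro i
      rcases Nat.eq_zero_or_pos i with h0 | h1
      · simp [h0]
      · obtain ⟨t, hts, htcard⟩ := hSinf.exists_subset_card_eq i
        have hprodmem : (∏ h ∈ t, h) ∈ (maximalIdeal A) ^ i := by
          rw [← htcard]
          clear htcard key
          induction t using Finset.induction_on with
          | empty => simp
          | @insert a t ha ih =>
            rw [Finset.prod_insert ha, Finset.card_insert_of_notMem ha, pow_succ']
            exact Ideal.mul_mem_mul (hSm (hts (by simp)))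
              (ih (fun x hx => hts (by simp [hx])))
        obtain ⟨g, hg⟩ := Ideal.mem_span_singleton.mp (key t hts)
        rw [hg]
        exact Ideal.mul_mem_right g _ hprodmem
    rw [hbot] at hfmem
    exact hfmem
end

section
/- Let (E, g) be an n-dimensional real vector space with a non-degenerate symmetric bilinear form, and let m ≤ n. Then the polynomial functions y_{ij}(e_1,…,e_m) = g(e_i, e_j) for 1 ≤ i ≤ j ≤ m on E^m are algebraically independent over ℝ. -/
open Filter

/-- A multivariate polynomial over `ℝ` that vanishes on a neighborhood of a point is zero. -/
lemma mvpoly_eq_zero_of_zero_on_nhds {σ : Type*} (p : MvPolynomial σ ℝ) (x₀ : σ → ℝ)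
    (U : Set (σ → ℝ)) (hU : U ∈ nhds x₀) (h : ∀ x ∈ U, MvPolynomial.eval x p = 0) : p = 0 := by
  have haev : ∀ (f : σ → ℝ) (r : MvPolynomial σ ℝ),
      MvPolynomial.aeval f r = MvPolynomial.eval f r := by
    intro f r
    rw [← MvPolynomial.coe_aeval_eq_eval]
    rfl
  have key : ∀ x : σ → ℝ, MvPolynomial.eval x p = 0 := by
    intro x
    set g : σ → Polynomial ℝ :=
      fun i => Polynomial.C (x₀ i) + Polynomial.C (x i - x₀ i) * Polynomial.X with hg
    set q : Polynomial ℝ := MvPolynomial.aeval g p with hqdef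
    have hqt : ∀ t : ℝ,
        Polynomial.eval t q = MvPolynomial.eval (fun i => x₀ i + (x i - x₀ i) * t) p := by
      intro t
      have h1 : (Polynomial.aeval t : Polynomial ℝ →ₐ[ℝ] ℝ).comp (MvPolynomial.aeval g) =
          MvPolynomial.aeval (fun i => Polynomial.aeval t (g i)) :=
        MvPolynomial.comp_aeval (f := g) _
      have h2 := congrArg (fun φ : MvPolynomial σ ℝ →ₐ[ℝ] ℝ => φ p) h1
      simp only [AlgHom.comp_apply] at h2
      have h3 : (fun i => Polynomial.aeval t (g i)) = fun i => x₀ i + (x i - x₀ i) * t := by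
        funext i; simp [hg]
      rw [h3, haev] at h2
      rw [← congrFun (Polynomial.coe_aeval_eq_eval t) q, hqdef]
      exact h2
    have hroots : Set.Infinite {t : ℝ | q.IsRoot t} := by
      have hc : Continuous fun t : ℝ => (fun i => x₀ i + (x i - x₀ i) * t) :=
        continuous_pi fun i => continuous_const.add (continuous_const.mul continuous_id)
      have hmem : {t : ℝ | (fun i => x₀ i + (x i - x₀ i) * t) ∈ U} ∈ nhds (0 : ℝ) := by
        have := hc.continuousAt (x := (0 : ℝ)).preimage_mem_nhds (by
          simpa using hU)
        exact this
      refine (infinite_of_mem_nhds (0 : ℝ) hmem).mono ?_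
      intro t ht
      simp only [Set.mem_setOf_eq] at ht ⊢
      rw [Polynomial.IsRoot, hqt t]
      exact h _ ht
    have hq0 : q = 0 := Polynomial.eq_zero_of_infinite_isRoot q hroots
    have h1 := hqt 1
    rw [hq0] at h1
    simp only [Polynomial.eval_zero] at h1
    have : (fun i => x₀ i + (x i - x₀ i) * 1) = x := by funext i; ring
    rw [this] at h1
    exact h1.symm
  refine MvPolynomial.funext fun x => ?_
  rw [key x]
  simp


open Filter Module

section Main

variable (n m : ℕ) (hm : m ≤ n) (d : Fin n → ℝ)

/-- The Gram map associated to a diagonal form with entries `d`. -/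
noncomputable def gramMap (x : (Fin n × Fin m) → ℝ) (s : {q : Fin m × Fin m // q.1 ≤ q.2}) : ℝ :=
  ∑ k : Fin n, d k * (x (k, s.1.1) * x (k, s.1.2))

/-- The base point: the "standard inclusion" matrix. -/
def basePt : (Fin n × Fin m) → ℝ := fun kq => if (kq.1 : ℕ) = (kq.2 : ℕ) then 1 else 0

noncomputable def gramDeriv :
    ((Fin n × Fin m) → ℝ) →L[ℝ] ({q : Fin m × Fin m // q.1 ≤ q.2} → ℝ) :=
  ContinuousLinearMap.pi fun s =>
    ∑ k : Fin n, d k •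
      (basePt n m (k, s.1.1) • ContinuousLinearMap.proj (R := ℝ) (φ := fun _ : Fin n × Fin m => ℝ) (k, s.1.2) +
       basePt n m (k, s.1.2) • ContinuousLinearMap.proj (k, s.1.1))

theorem gramMap_hasDeriv :
    HasStrictFDerivAt (gramMap n m d) (gramDeriv n m d) (basePt n m) := by
  apply hasStrictFDerivAt_pi''
  intro s
  rw [gramDeriv, ContinuousLinearMap.proj_pi]
  refine HasStrictFDerivAt.fun_sum fun k _ => ?_
  have h1 := (ContinuousLinearMap.proj (R := ℝ) (φ := fun _ : Fin n × Fin m => ℝ)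
    (k, s.1.1)).hasStrictFDerivAt (x := basePt n m)
  have h2 := (ContinuousLinearMap.proj (R := ℝ) (φ := fun _ : Fin n × Fin m => ℝ)
    (k, s.1.2)).hasStrictFDerivAt (x := basePt n m)
  exact (h1.mul h2).const_mul (d k)

theorem gramDeriv_surj (hm : m ≤ n) (hd : ∀ k, d k ≠ 0) :
    LinearMap.range (gramDeriv n m d : ((Fin n × Fin m) → ℝ) →L[ℝ] _).toLinearMap = ⊤ := by
  classical
  rw [LinearMap.range_eq_top]
  intro c
  refine ⟨fun kq =>
    if hlt : (kq.1 : ℕ) < (kq.2 : ℕ) ∧ (kq.1 : ℕ) < m then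
      c ⟨(⟨kq.1, hlt.2⟩, kq.2), le_of_lt hlt.1⟩ / d kq.1
    else if (kq.1 : ℕ) = (kq.2 : ℕ) then c ⟨(kq.2, kq.2), le_refl _⟩ / (2 * d kq.1)
    else 0, ?_⟩
  set h : (Fin n × Fin m) → ℝ := fun kq =>
    if hlt : (kq.1 : ℕ) < (kq.2 : ℕ) ∧ (kq.1 : ℕ) < m then
      c ⟨(⟨kq.1, hlt.2⟩, kq.2), le_of_lt hlt.1⟩ / d kq.1
    else if (kq.1 : ℕ) = (kq.2 : ℕ) then c ⟨(kq.2, kq.2), le_refl _⟩ / (2 * d kq.1)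
    else 0 with hh
  funext s
  obtain ⟨⟨i, j⟩, hij⟩ := s
  set i' : Fin n := Fin.castLE hm i with hi'
  set j' : Fin n := Fin.castLE hm j with hj'
  have hval : ∀ x : (Fin n × Fin m) → ℝ,
      gramDeriv n m d x ⟨(i, j), hij⟩ = d i' * x (i', j) + d j' * x (j', i) := by
    intro x
    simp only [gramDeriv, ContinuousLinearMap.pi_apply, ContinuousLinearMap.sum_apply,
      ContinuousLinearMap.smul_apply, ContinuousLinearMap.add_apply,
      ContinuousLinearMap.proj_apply, smul_eq_mul]
    have hsplit : ∀ k : Fin n,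
        d k * (basePt n m (k, i) * x (k, j) + basePt n m (k, j) * x (k, i)) =
        (if k = i' then d k * x (k, j) else 0) + (if k = j' then d k * x (k, i) else 0) := by
      intro k
      have e1 : basePt n m (k, i) = if k = i' then (1 : ℝ) else 0 := by
        simp only [basePt, hi']
        congr 1
        simp [Fin.ext_iff]
      have e2 : basePt n m (k, j) = if k = j' then (1 : ℝ) else 0 := by
        simp only [basePt, hj']
        congr 1
        simp [Fin.ext_iff]
      rw [e1, e2]
      by_cases h1 : k = i' <;> by_cases h2 : k = j' <;> simp [h1, h2, mul_ite, mul_zero] <;> split_ifs <;> ring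
    rw [Finset.sum_congr rfl fun k _ => hsplit k, Finset.sum_add_distrib,
      Finset.sum_ite_eq' Finset.univ i' (fun k => d k * x (k, j)),
      Finset.sum_ite_eq' Finset.univ j' (fun k => d k * x (k, i))]
    simp
  rw [ContinuousLinearMap.coe_coe, hval]
  rcases lt_or_eq_of_le hij with hlt | heq
  · -- i < j
    have hj0 : h (j', i) = 0 := by
      rw [hh]
      simp only [hj']
      rw [dif_neg, if_neg]
      · exact fun hc => absurd (Fin.ext hc : j = i) (ne_of_gt hlt)
      · rintro ⟨hc, -⟩
        exact absurd (lt_trans hc hlt) (lt_irrefl _)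
    have hi0 : h (i', j) = c ⟨(i, j), hij⟩ / d i' := by
      rw [hh]
      have hcond : ((i' : Fin n) : ℕ) < (j : ℕ) ∧ ((i' : Fin n) : ℕ) < m := ⟨hlt, i.2⟩
      dsimp only
      rw [dif_pos hcond]
      rfl
    rw [hi0, hj0]
    rw [mul_zero, add_zero, mul_div_cancel₀ _ (hd i')]
  · -- i = j
    have heq' : i = j := heq
    subst heq'
    have hi0 : h (i', i) = c ⟨(i, i), hij⟩ / (2 * d i') := by
      rw [hh]
      dsimp only
      rw [dif_neg (by rintro ⟨hc, -⟩; exact absurd hc (lt_irrefl _))]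
      rw [if_pos (show ((Fin.castLE hm i : Fin n) : ℕ) = (i : ℕ) from rfl)]
    rw [hi0]
    have hdi := hd i'
    field_simp
    ring

end Main

/-- If `(E, g)` is an `n`-dimensional real vector space with a
non-degenerate symmetric bilinear form and `m ≤ n`, the polynomial functions
`y_{ij} (e₁, …, e_m) = g (e_i) (e_j)`, `i ≤ j`, on `E^m` are algebraically independent
over `ℝ`. -/
theorem y_ij_algebraicIndependent
    (E : Type*) [AddCommGroup E] [Module ℝ E] (n m : ℕ)
    (hn : Module.finrank ℝ E = n)
    (B : LinearMap.BilinForm ℝ E) (hsymm : ∀ v w, B v w = B w v)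
    (hnd : B.Nondegenerate) (hm : m ≤ n) :
    AlgebraicIndependent ℝ
      (fun (p : {q : Fin m × Fin m // q.1 ≤ q.2}) (e : Fin m → E) =>
        B (e p.1.1) (e p.1.2)) := by
  rcases Nat.eq_zero_or_pos m with rfl | hmpos
  · haveI : IsEmpty {q : Fin 0 × Fin 0 // q.1 ≤ q.2} := ⟨fun q => q.1.1.elim0⟩
    rw [algebraicIndependent_empty_type_iff]
    intro r r' hrr'
    have := congrFun hrr' (fun j => j.elim0)
    simpa using this
  · have hn0 : 0 < n := lt_of_lt_of_le hmpos hm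
    haveI : FiniteDimensional ℝ E := Module.finite_of_finrank_pos (by rw [hn]; exact hn0)
    letI : Invertible (2 : ℝ) := invertibleOfNonzero two_ne_zero
    obtain ⟨v', hv'⟩ := LinearMap.BilinForm.exists_orthogonal_basis
      (B := B) ⟨fun x y => hsymm x y⟩
    set v : Basis (Fin n) ℝ E := v'.reindex (finCongr hn) with hv
    have hvo : ∀ k l : Fin n, k ≠ l → B (v k) (v l) = 0 := by
      intro k l hkl
      rw [hv]
      simp only [Basis.coe_reindex, Function.comp_apply]
      exact hv' fun hc => hkl ((finCongr hn).symm.injective hc)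
    set d : Fin n → ℝ := fun k => B (v k) (v k) with hdd
    have hd : ∀ k, d k ≠ 0 := by
      intro k
      have hortho : B.iIsOrtho ⇑v := fun a b hab => hvo a b hab
      exact LinearMap.BilinForm.iIsOrtho.not_isOrtho_basis_self_of_nondegenerate hortho hnd k
    rw [algebraicIndependent_iff]
    intro p hp
    have heval : ∀ x : (Fin n × Fin m) → ℝ, MvPolynomial.eval (gramMap n m d x) p = 0 := by
      intro x
      set e : Fin m → E := fun i => ∑ k : Fin n, x (k, i) • v k with he
      have hBe : ∀ s : {q : Fin m × Fin m // q.1 ≤ q.2},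
          B (e s.1.1) (e s.1.2) = gramMap n m d x s := by
        intro s
        rw [he]
        simp only [map_sum, map_smul, LinearMap.sum_apply, LinearMap.smul_apply, smul_eq_mul]
        rw [gramMap]
        refine Finset.sum_congr rfl fun k _ => ?_
        rw [Finset.sum_eq_single k]
        · show x (k, s.1.2) * (x (k, s.1.1) * d k) = d k * (x (k, s.1.1) * x (k, s.1.2))
          ring
        · intro l _ hl
          rw [hvo l k hl, mul_zero]
        · intro hk
          exact absurd (Finset.mem_univ k) hk
      set y : {q : Fin m × Fin m // q.1 ≤ q.2} → ((Fin m → E) → ℝ) :=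
        fun s (e : Fin m → E) => B (e s.1.1) (e s.1.2) with hy
      set φ : ((Fin m → E) → ℝ) →ₐ[ℝ] ℝ := Pi.evalAlgHom ℝ (fun _ : (Fin m → E) => ℝ) e with hφ
      have h1 : φ (MvPolynomial.aeval y p) = 0 := by rw [hp]; simp
      have h2 := congrArg (fun ψ : MvPolynomial {q : Fin m × Fin m // q.1 ≤ q.2} ℝ →ₐ[ℝ] ℝ =>
        ψ p) (MvPolynomial.comp_aeval (f := y) φ)
      simp only [AlgHom.comp_apply] at h2
      rw [h2] at h1
      have h3 : (fun s => φ (y s)) = gramMap n m d x := by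
        funext s
        rw [hφ, hy]
        exact hBe s
      rw [h3] at h1
      rw [← MvPolynomial.coe_aeval_eq_eval]
      exact h1
    have hder := gramMap_hasDeriv n m d
    have hsurj := gramDeriv_surj n m d hm hd
    have hmap := hder.map_nhds_eq_of_surj hsurj
    have hrange : Set.range (gramMap n m d) ∈ nhds (gramMap n m d (basePt n m)) := by
      rw [← hmap]
      have : (gramMap n m d) '' Set.univ ∈ Filter.map (gramMap n m d) (nhds (basePt n m)) :=
        Filter.image_mem_map Filter.univ_mem
      rwa [Set.image_univ] at this
    exact mvpoly_eq_zero_of_zero_on_nhds p _ _ hrange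
      (fun z hz => by obtain ⟨x, rfl⟩ := hz; exact heval x)
end
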